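/- arXiv:2501.05237 — 4 statements merged into one kernel-verified Lean document; each statement's English description precedes it below -/
import Mathlib

section
/- If d is even and n ≥ 2, then no odd permutation of the d^n element state space (Fin d)^n can be written as a product of permutations of the form π ⊗ id, where each π is a permutation acting only on a chosen subset of n−1 coordinates (i.e., of the form σ × id on (Fin d)^(n−1) × Fin d after a coordinate permutation). Equivalently: every permutation of (Fin d)^(n−1) × Fin d of the form (v, w) ↦ (σ(v), w) with σ ∈ S_{d^{n−1}} is an even permutation of the full space when d is even. -/
/-- When d is even and n ≥ 2, every permutation of (Fin d)^(n-1) × Fin d of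
the form (v,w) ↦ (σ v, w) is an even permutation of the full space. -/
theorem stmt_9 (d n : ℕ) (hd : Even d) (hn : 2 ≤ n)
    (σ : Equiv.Perm (Fin (n - 1) → Fin d)) :
    Equiv.Perm.sign (Equiv.prodCongr σ (Equiv.refl (Fin d))) = 1 := by
  have h : Equiv.prodCongr σ (Equiv.refl (Fin d)) =
      Equiv.prodCongrLeft (fun _ : Fin d => σ) := by
    exact Equiv.prodCongr_refl_right σ
  rw [h, Equiv.Perm.sign_prodCongrLeft]
  simp only [Finset.prod_const, Finset.card_univ, Fintype.card_fin]
  rcases Int.units_eq_one_or (Equiv.Perm.sign σ) with h1 | h1 <;> simp [h1, hd.neg_one_pow]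
end

section
/- Any permutation π of Fin s × Fin t can be written as π = π₃ ∘ π₂ ∘ π₁, where π₁ and π₃ preserve the first coordinate (row) of every element and π₂ preserves the second coordinate (column) of every element. -/
open Finset

/-- Edge coloring lemma: if `a` and `b` both have all fibers of size `n` on `E`,
there is a coloring of `E` with `n` colors such that on each color class both
`a` and `b` are injective. -/
lemma col_aux {X : Type} [DecidableEq X] {s : ℕ} (a b : X → Fin s) :
    ∀ (n : ℕ) (E : Finset X),
      (∀ v, (E.filter fun x => a x = v).card = n) →
      (∀ v, (E.filter fun x => b x = v).card = n) →
      ∃ color : X → ℕ,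
        (∀ e ∈ E, color e < n) ∧
        (∀ e ∈ E, ∀ e' ∈ E, color e = color e' → a e = a e' → e = e') ∧
        (∀ e ∈ E, ∀ e' ∈ E, color e = color e' → b e = b e' → e = e') := by
  intro n
  induction n with
  | zero =>
      intro E ha _
      have hE : ∀ e ∈ E, False := by
        intro e he
        have h1 : e ∈ E.filter fun x => a x = a e := mem_filter.mpr ⟨he, rfl⟩
        have h2 := Finset.card_eq_zero.mp (ha (a e))
        simp [h2] at h1
      exact ⟨fun _ => 0, fun e he => (hE e he).elim, fun e he => (hE e he).elim,
        fun e he => (hE e he).elim⟩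
  | succ n ih =>
      intro E ha hb
      set r : Fin s → Finset (Fin s) := fun i => (E.filter fun x => a x = i).image b with hr
      have hall : ∀ S : Finset (Fin s), S.card ≤ (S.biUnion r).card := by
        intro S
        set T := S.biUnion r with hT
        have h1 : (E.filter fun x => a x ∈ S).card = (n + 1) * S.card := by
          rw [Finset.card_eq_sum_card_fiberwise
            (s := E.filter fun x => a x ∈ S) (f := a) (t := S) (fun x hx => (mem_filter.mp hx).2)]
          rw [Finset.sum_congr rfl (fun i hi => ?_), Finset.sum_const, smul_eq_mul, mul_comm]
          have : (E.filter fun x => a x ∈ S).filter (fun x => a x = i) =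
              E.filter fun x => a x = i := by
            ext x
            simp only [mem_filter, and_assoc]
            constructor
            · rintro ⟨h1, _, h3⟩; exact ⟨h1, h3⟩
            · rintro ⟨h1, h3⟩; exact ⟨h1, h3 ▸ hi, h3⟩
          rw [this, ha i]
        have h2 : (E.filter fun x => b x ∈ T).card = (n + 1) * T.card := by
          rw [Finset.card_eq_sum_card_fiberwise
            (s := E.filter fun x => b x ∈ T) (f := b) (t := T) (fun x hx => (mem_filter.mp hx).2)]
          rw [Finset.sum_congr rfl (fun i hi => ?_), Finset.sum_const, smul_eq_mul, mul_comm]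
          have : (E.filter fun x => b x ∈ T).filter (fun x => b x = i) =
              E.filter fun x => b x = i := by
            ext x
            simp only [mem_filter, and_assoc]
            constructor
            · rintro ⟨h1, _, h3⟩; exact ⟨h1, h3⟩
            · rintro ⟨h1, h3⟩; exact ⟨h1, h3 ▸ hi, h3⟩
          rw [this, hb i]
        have hsub : (E.filter fun x => a x ∈ S) ⊆ (E.filter fun x => b x ∈ T) := by
          intro x hx
          obtain ⟨hxE, hxa⟩ := mem_filter.mp hx
          refine mem_filter.mpr ⟨hxE, ?_⟩
          exact Finset.mem_biUnion.mpr ⟨a x, hxa,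
            Finset.mem_image.mpr ⟨x, mem_filter.mpr ⟨hxE, rfl⟩, rfl⟩⟩
        have := Finset.card_le_card hsub
        rw [h1, h2] at this
        exact Nat.le_of_mul_le_mul_left this (Nat.succ_pos n)
      obtain ⟨f, hfinj, hfr⟩ := (Finset.all_card_le_biUnion_card_iff_exists_injective r).mp hall
      have hchoice : ∀ i, ∃ x, x ∈ E ∧ a x = i ∧ b x = f i := by
        intro i
        obtain ⟨x, hx, hbx⟩ := Finset.mem_image.mp (hfr i)
        exact ⟨x, (mem_filter.mp hx).1, (mem_filter.mp hx).2, hbx⟩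
      choose e hEe hae hbe using hchoice
      have hfb : Function.Bijective f := Finite.injective_iff_bijective.mp hfinj
      set fe : Fin s ≃ Fin s := Equiv.ofBijective f hfb with hfe
      set M : Finset X := Finset.univ.image e with hM
      set E' : Finset X := E \ M with hE'
      have ha' : ∀ v, (E'.filter fun x => a x = v).card = n := by
        intro v
        have heq : E'.filter (fun x => a x = v) = (E.filter fun x => a x = v).erase (e v) := by
          ext x
          simp only [hE', hM, mem_filter, mem_sdiff, mem_erase, mem_image, mem_univ,
            true_and, not_exists]
          constructor
          · rintro ⟨⟨hxE, hnot⟩, hav⟩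
            exact ⟨fun h => hnot v h.symm, hxE, hav⟩
          · rintro ⟨hne, hxE, hav⟩
            refine ⟨⟨hxE, fun i hi => ?_⟩, hav⟩
            apply hne
            have : i = v := by rw [← hae i, hi, hav]
            rw [← this, hi]
        rw [heq, Finset.card_erase_of_mem (mem_filter.mpr ⟨hEe v, hae v⟩), ha v]
        rfl
      have hb' : ∀ v, (E'.filter fun x => b x = v).card = n := by
        intro v
        have heq : E'.filter (fun x => b x = v) =
            (E.filter fun x => b x = v).erase (e (fe.symm v)) := by
          ext x
          simp only [hE', hM, mem_filter, mem_sdiff, mem_erase, mem_image, mem_univ,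
            true_and, not_exists]
          constructor
          · rintro ⟨⟨hxE, hnot⟩, hbv⟩
            exact ⟨fun h => hnot (fe.symm v) h.symm, hxE, hbv⟩
          · rintro ⟨hne, hxE, hbv⟩
            refine ⟨⟨hxE, fun i hi => ?_⟩, hbv⟩
            apply hne
            have hfi : f i = v := by rw [← hbe i, hi, hbv]
            have : i = fe.symm v := by
              apply_fun fe.symm at hfi
              simpa [hfe] using hfi
            rw [← this, hi]
        have hmem : e (fe.symm v) ∈ E.filter fun x => b x = v := by
          refine mem_filter.mpr ⟨hEe _, ?_⟩
          have : f (fe.symm v) = v := fe.apply_symm_apply v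
          rw [hbe, this]
        rw [heq, Finset.card_erase_of_mem hmem, hb v]
        rfl
      obtain ⟨color', hbound, hA, hB⟩ := ih E' ha' hb'
      refine ⟨fun x => if x ∈ M then n else color' x, ?_, ?_, ?_⟩
      · intro x hx
        by_cases hxM : x ∈ M
        · simp [hxM]
        · simp only [hxM, if_false]
          exact Nat.lt_succ_of_lt (hbound x (mem_sdiff.mpr ⟨hx, hxM⟩))
      · intro x hx y hy hc hax
        by_cases hxM : x ∈ M <;> by_cases hyM : y ∈ M
        · obtain ⟨i, _, hi⟩ := Finset.mem_image.mp hxM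
          obtain ⟨j, _, hj⟩ := Finset.mem_image.mp hyM
          have : i = j := by rw [← hae i, ← hae j, hi, hj, hax]
          rw [← hi, ← hj, this]
        · exfalso
          simp only [hxM, hyM, if_true, if_false] at hc
          exact absurd hc.symm (Nat.ne_of_lt (hbound y (mem_sdiff.mpr ⟨hy, hyM⟩)))
        · exfalso
          simp only [hxM, hyM, if_true, if_false] at hc
          exact absurd hc (Nat.ne_of_lt (hbound x (mem_sdiff.mpr ⟨hx, hxM⟩)))
        · simp only [hxM, hyM, if_false] at hc
          exact hA x (mem_sdiff.mpr ⟨hx, hxM⟩) y (mem_sdiff.mpr ⟨hy, hyM⟩) hc hax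
      · intro x hx y hy hc hbx
        by_cases hxM : x ∈ M <;> by_cases hyM : y ∈ M
        · obtain ⟨i, _, hi⟩ := Finset.mem_image.mp hxM
          obtain ⟨j, _, hj⟩ := Finset.mem_image.mp hyM
          have : f i = f j := by rw [← hbe i, ← hbe j, hi, hj, hbx]
          rw [← hi, ← hj, hfinj this]
        · exfalso
          simp only [hxM, hyM, if_true, if_false] at hc
          exact absurd hc.symm (Nat.ne_of_lt (hbound y (mem_sdiff.mpr ⟨hy, hyM⟩)))
        · exfalso
          simp only [hxM, hyM, if_true, if_false] at hc
          exact absurd hc (Nat.ne_of_lt (hbound x (mem_sdiff.mpr ⟨hx, hxM⟩)))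
        · simp only [hxM, hyM, if_false] at hc
          exact hB x (mem_sdiff.mpr ⟨hx, hxM⟩) y (mem_sdiff.mpr ⟨hy, hyM⟩) hc hbx

/-- Any permutation π of Fin s × Fin t can be written π = π₃ ∘ π₂ ∘ π₁ where
π₁ and π₃ preserve the first coordinate of every element and π₂ preserves the
second coordinate of every element. -/
theorem stmt_12 (s t : ℕ) (π : Equiv.Perm (Fin s × Fin t)) :
    ∃ π₁ π₂ π₃ : Equiv.Perm (Fin s × Fin t),
      (∀ x, (π₁ x).1 = x.1) ∧ (∀ x, (π₂ x).2 = x.2) ∧ (∀ x, (π₃ x).1 = x.1) ∧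
      π = π₃ * π₂ * π₁ := by
  classical
  set a : Fin s × Fin t → Fin s := Prod.fst with haa
  set b : Fin s × Fin t → Fin s := fun x => (π x).1 with hbb
  have hafib : ∀ v, ((Finset.univ : Finset (Fin s × Fin t)).filter
      fun x => a x = v).card = t := by
    intro v
    have : ((Finset.univ : Finset (Fin s × Fin t)).filter fun x => a x = v) =
        Finset.univ.map ⟨fun c : Fin t => (v, c), fun c c' h => congrArg Prod.snd h⟩ := by
      ext x
      simp only [Finset.mem_filter, Finset.mem_univ, true_and, Finset.mem_map,
        Function.Embedding.coeFn_mk]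
      constructor
      · intro h
        refine ⟨x.2, ?_⟩
        rw [← h]; rfl
      · rintro ⟨c, rfl⟩; rfl
    rw [this, Finset.card_map, Finset.card_univ, Fintype.card_fin]
  have hbfib : ∀ v, ((Finset.univ : Finset (Fin s × Fin t)).filter
      fun x => b x = v).card = t := by
    intro v
    have : ((Finset.univ : Finset (Fin s × Fin t)).filter fun x => b x = v) =
        (Finset.univ.filter fun x => a x = v).map π.symm.toEmbedding := by
      ext x
      simp only [Finset.mem_filter, Finset.mem_univ, true_and, Finset.mem_map,
        Equiv.coe_toEmbedding]
      constructor
      · intro h; exact ⟨π x, h, π.symm_apply_apply x⟩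
      · rintro ⟨y, hy, rfl⟩; simp only [hbb, Equiv.apply_symm_apply]; exact hy
    rw [this, Finset.card_map, hafib]
  obtain ⟨color, hbound, hA, hB⟩ := col_aux a b t Finset.univ hafib hbfib
  -- row permutations g r
  have hbound' : ∀ x : Fin s × Fin t, color x < t := fun x => hbound x (Finset.mem_univ x)
  set g : Fin s → Fin t → Fin t := fun r c => ⟨color (r, c), hbound' (r, c)⟩ with hg
  have hginj : ∀ r, Function.Injective (g r) := by
    intro r c c' h
    have hc : color (r, c) = color (r, c') := by
      simpa [hg, Fin.mk.injEq] using h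
    have := hA (r, c) (Finset.mem_univ _) (r, c') (Finset.mem_univ _) hc rfl
    exact (Prod.mk.injEq _ _ _ _ ▸ this).2
  set gE : Fin s → (Fin t ≃ Fin t) := fun r =>
    Equiv.ofBijective (g r) (Finite.injective_iff_bijective.mp (hginj r)) with hgE
  -- π₁
  set F : Fin s × Fin t → Fin s × Fin t := fun x => (x.1, gE x.1 x.2) with hF
  have hFinj : Function.Injective F := by
    rintro ⟨r, c⟩ ⟨r', c'⟩ h
    obtain ⟨h1, h2⟩ := Prod.mk.injEq _ _ _ _ ▸ h
    subst h1
    exact Prod.ext rfl ((gE r).injective h2)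
  set π₁ : Equiv.Perm (Fin s × Fin t) :=
    Equiv.ofBijective F (Finite.injective_iff_bijective.mp hFinj) with hπ₁
  -- π₂
  set H : Fin s × Fin t → Fin s × Fin t := fun x =>
    ((π (x.1, (gE x.1).symm x.2)).1, x.2) with hH
  have hHinj : Function.Injective H := by
    rintro ⟨r, j⟩ ⟨r', j'⟩ h
    obtain ⟨h1, h2⟩ := Prod.mk.injEq _ _ _ _ ▸ h
    subst h2
    have hc : color (r, (gE r).symm j) = color (r', (gE r').symm j) := by
      have e1 : (g r) ((gE r).symm j) = j := (gE r).apply_symm_apply j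
      have e2 : (g r') ((gE r').symm j) = j := (gE r').apply_symm_apply j
      have := e1.trans e2.symm
      simpa [hg, Fin.mk.injEq] using this
    have := hB (r, (gE r).symm j) (Finset.mem_univ _) (r', (gE r').symm j)
      (Finset.mem_univ _) hc h1
    exact Prod.ext (Prod.mk.injEq _ _ _ _ ▸ this).1 rfl
  set π₂ : Equiv.Perm (Fin s × Fin t) :=
    Equiv.ofBijective H (Finite.injective_iff_bijective.mp hHinj) with hπ₂
  refine ⟨π₁, π₂, π * π₁⁻¹ * π₂⁻¹, ?_, ?_, ?_, ?_⟩
  · intro x; rfl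
  · intro x; rfl
  · intro x
    obtain ⟨z, rfl⟩ : ∃ z, π₂ (π₁ z) = x := ⟨π₁⁻¹ (π₂⁻¹ x), by simp⟩
    simp only [Equiv.Perm.mul_apply, Equiv.Perm.inv_def, Equiv.symm_apply_apply]
    obtain ⟨r, c⟩ := z
    show (π (r, c)).1 = (H (F (r, c))).1
    simp only [hH, hF]
    rw [Equiv.symm_apply_apply]
  · group
end

section
/- Let π be a type-R permutation of Fin s × Fin t (i.e., π(r,c) = (r, π_r(c)) for permutations π_r ∈ S_t), and suppose π is even and t ≥ 2. Define π'_r = π_r if π_r is even, and π'_r = (0 1) ∘ π_r otherwise, and let π' be the type-R permutation induced by the π'_r. Then π' is even, each π'_r is even, and π ∘ π'⁻¹ is a product of transpositions ((r, 0) (r, 1)) over an even number of distinct rows r. -/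
/-- For an even type-R permutation π of Fin s × Fin t (t ≥ 2), given by row
permutations π_r, define π'_r = π_r if π_r is even and π'_r = (0 1) π_r
otherwise, and let π' be the induced type-R permutation. Then π' is even,
each π'_r is even, and π ∘ π'⁻¹ acts as the product of the transpositions
((r,0) (r,1)) over an even number of distinct rows r. -/
theorem stmt_13 (s t : ℕ) (ht : 2 ≤ t) (πr : Fin s → Equiv.Perm (Fin t))
    (hπ : Equiv.Perm.sign (Equiv.prodShear (Equiv.refl (Fin s)) πr) = 1) :
    let c0 : Fin t := ⟨0, by omega⟩
    let c1 : Fin t := ⟨1, by omega⟩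
    let πr' : Fin s → Equiv.Perm (Fin t) := fun r =>
      if Equiv.Perm.sign (πr r) = 1 then πr r else Equiv.swap c0 c1 * πr r
    let π : Equiv.Perm (Fin s × Fin t) := Equiv.prodShear (Equiv.refl (Fin s)) πr
    let π' : Equiv.Perm (Fin s × Fin t) := Equiv.prodShear (Equiv.refl (Fin s)) πr'
    Equiv.Perm.sign π' = 1 ∧ (∀ r, Equiv.Perm.sign (πr' r) = 1) ∧
    ∃ R : Finset (Fin s), Even R.card ∧
      ∀ x : Fin s × Fin t, (π * π'⁻¹) x =
        if x.1 ∈ R ∧ x.2 = c0 then (x.1, c1)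
        else if x.1 ∈ R ∧ x.2 = c1 then (x.1, c0)
        else x := by
  intro c0 c1 πr' π π'
  have hshear : ∀ (σ : Fin s → Equiv.Perm (Fin t)),
      Equiv.prodShear (Equiv.refl (Fin s)) σ = Equiv.prodCongrRight σ := by
    intro σ; ext x <;> rfl
  have hsign : ∀ (σ : Fin s → Equiv.Perm (Fin t)),
      Equiv.Perm.sign (Equiv.prodShear (Equiv.refl (Fin s)) σ)
        = ∏ r, Equiv.Perm.sign (σ r) := by
    intro σ; rw [hshear, Equiv.Perm.sign_prodCongrRight]
  have hc01 : c0 ≠ c1 := by simp [c0, c1, Fin.ext_iff]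
  have hπr' : ∀ r, Equiv.Perm.sign (πr' r) = 1 := by
    intro r
    by_cases h : Equiv.Perm.sign (πr r) = 1
    · simp [πr', h]
    · have h' : Equiv.Perm.sign (πr r) = -1 := by
        rcases Int.units_eq_one_or (Equiv.Perm.sign (πr r)) with h1 | h1
        · exact absurd h1 h
        · exact h1
      simp [πr', h, Equiv.Perm.sign_swap hc01, h']
  have hsπ' : Equiv.Perm.sign π' = 1 := by
    rw [hsign]; simp [hπr']
  refine ⟨hsπ', hπr', ?_⟩
  refine ⟨Finset.univ.filter (fun r => Equiv.Perm.sign (πr r) ≠ 1), ?_, ?_⟩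
  · have hprod : (∏ r, Equiv.Perm.sign (πr r)) = 1 := by rw [← hsign]; exact hπ
    have : (∏ r, Equiv.Perm.sign (πr r))
        = (-1) ^ (Finset.univ.filter (fun r => Equiv.Perm.sign (πr r) ≠ 1)).card := by
      rw [← Finset.prod_filter_mul_prod_filter_not Finset.univ
        (fun r => Equiv.Perm.sign (πr r) ≠ 1)]
      have h1 : ∀ r ∈ Finset.univ.filter (fun r => Equiv.Perm.sign (πr r) ≠ 1),
          Equiv.Perm.sign (πr r) = -1 := by
        intro r hr
        simp only [Finset.mem_filter] at hr
        rcases Int.units_eq_one_or (Equiv.Perm.sign (πr r)) with h1 | h1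
        · exact absurd h1 hr.2
        · exact h1
      have h2 : ∀ r ∈ Finset.univ.filter (fun r => ¬Equiv.Perm.sign (πr r) ≠ 1),
          Equiv.Perm.sign (πr r) = 1 := by
        intro r hr
        simp only [Finset.mem_filter, not_not] at hr
        exact hr.2
      rw [Finset.prod_congr rfl h1, Finset.prod_congr rfl h2,
        Finset.prod_const, Finset.prod_const_one, mul_one]
    rw [this] at hprod
    by_contra hodd
    rw [Nat.not_even_iff_odd] at hodd
    rw [hodd.neg_one_pow] at hprod
    exact absurd hprod (by decide)
  · rintro ⟨r, c⟩
    have happ : (π * π'⁻¹) (r, c) = (r, (πr r) ((πr' r)⁻¹ c)) := rfl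
    by_cases hr : Equiv.Perm.sign (πr r) = 1
    · have hmem : r ∉ Finset.univ.filter (fun r => Equiv.Perm.sign (πr r) ≠ 1) := by
        simp [hr]
      have : πr' r = πr r := by simp [πr', hr]
      rw [happ, this]
      simp [hmem]
    · have hmem : r ∈ Finset.univ.filter (fun r => Equiv.Perm.sign (πr r) ≠ 1) := by
        simp [hr]
      have hpr : πr' r = Equiv.swap c0 c1 * πr r := by simp [πr', hr]
      have : (πr r) ((πr' r)⁻¹ c) = Equiv.swap c0 c1 c := by
        rw [hpr, mul_inv_rev]
        simp
      rw [happ, this]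
      by_cases h0 : c = c0
      · simp [h0, hmem, Equiv.swap_apply_left]
      · by_cases h1 : c = c1
        · simp [h1, hmem, h0, hc01.symm, Equiv.swap_apply_right]
        · simp [hmem, h0, h1, Equiv.swap_apply_of_ne_of_ne h0 h1]
end

section
/- There exists an even permutation of a set of size d^n (d ≥ 2, n ≥ 2) that cannot be written as a product of fewer than C·d permutations each of which acts on only d^{n−1} points in the structured sense: if N satisfies (n · (d^{n−1})!)^N ≥ (d^n)!/2, then N = Ω(d); concretely, N ≥ (n·d^n·ln d − d^n − ln 2) / ((n−1)·d^{n−1}·ln d + ln n). -/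
/-!
Take logarithms in `(d^n)! ≤ 2·(n·(d^{n-1})!)^N` and use `m log m - m ≤ log m! ≤ m log m`
(from `mᵐ/m! ≤ eᵐ` and `m! ≤ mᵐ`) on both factorials; with `log (d^n) = n log d` and
`log (d^{n-1}) = (n-1) log d` this is a linear lower bound on `N`.
-/

open Real
open scoped Nat

theorem Real.mul_log_sub_le_log_factorial (m : ℕ) : m * log m - m ≤ log (m ! : ℝ) := by
  have hpow : (m : ℝ) ^ m ≤ exp m * m ! := by
    have := pow_div_factorial_le_exp (x := (m : ℝ)) (by positivity) m
    rwa [div_le_iff₀ (by positivity)] at this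
  have := log_le_log (by exact_mod_cast Nat.pow_self_pos) hpow
  rw [log_pow, log_mul (exp_ne_zero _) (by positivity), log_exp] at this
  linarith

theorem Real.log_factorial_le_mul_log (k : ℕ) : log (k ! : ℝ) ≤ k * log k := by
  rw [← log_pow]
  exact log_le_log (by positivity) (by exact_mod_cast k.factorial_le_pow)

theorem mul_log_sub_le_of_factorial_le_two_mul_pow {m k c N : ℕ} (hc : 0 < c)
    (h : m ! ≤ 2 * (c * k !) ^ N) :
    m * log m - m - log 2 ≤ N * (k * log k + log c) := by
  have hcast : (m ! : ℝ) ≤ 2 * ((c : ℝ) * k !) ^ N := by exact_mod_cast h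
  have hlog := log_le_log (by positivity) hcast
  rw [log_mul two_ne_zero (by positivity), log_pow,
    log_mul (by positivity) (by positivity)] at hlog
  have hN : (N : ℝ) * log (k ! : ℝ) ≤ N * (k * log k) :=
    mul_le_mul_of_nonneg_left (log_factorial_le_mul_log k) N.cast_nonneg
  linarith [mul_log_sub_le_log_factorial m]

theorem stmt_15_general (d n N : ℕ) (hn : 2 ≤ n)
    (h : 2 * (n * (d ^ (n - 1)).factorial) ^ N ≥ (d ^ n).factorial) :
    (N : ℝ) ≥ ((n : ℝ) * d ^ n * Real.log d - d ^ n - Real.log 2) /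
      (((n : ℝ) - 1) * d ^ (n - 1) * Real.log d + Real.log n) := by
  have hlog_n : 0 < log n := log_pos (by exact_mod_cast hn)
  have hD : 0 < ((n : ℝ) - 1) * d ^ (n - 1) * log d + log n := by
    have hn1 : (0 : ℝ) ≤ n - 1 := by
      rw [sub_nonneg]; exact_mod_cast (by omega : 1 ≤ n)
    have := log_natCast_nonneg d
    positivity
  have key := mul_log_sub_le_of_factorial_le_two_mul_pow (by omega) h
  push_cast [log_pow, Nat.cast_sub (by omega : 1 ≤ n)] at key
  rw [ge_iff_le, div_le_iff₀ hD]
  linarith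

/-- If N sub-circuits suffice, i.e. (n·(d^{n-1})!)^N ≥ (d^n)!/2, then
N ≥ (n·d^n·ln d − d^n − ln 2) / ((n−1)·d^{n−1}·ln d + ln n). -/
theorem stmt_15 (d n N : ℕ) (hd : 2 ≤ d) (hn : 2 ≤ n)
    (h : 2 * (n * (d ^ (n - 1)).factorial) ^ N ≥ (d ^ n).factorial) :
    (N : ℝ) ≥ ((n : ℝ) * d ^ n * Real.log d - d ^ n - Real.log 2) /
      (((n : ℝ) - 1) * d ^ (n - 1) * Real.log d + Real.log n) :=
  stmt_15_general d n N hn h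
end
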